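/- If A is a commutative approximately weakly amenable Banach algebra, θ : A → B is a continuous algebra homomorphism into a Banach algebra B with dense range, then B is approximately weakly amenable. -/

import Mathlib

open ContinuousLinearMap Filter Topology

open ContinuousLinearMap Filter Topology

/-- A Banach `A`-bimodule: a complete normed `ℂ`-space with commuting continuous
left and right `A`-actions, jointly bounded and bilinear. -/
structure BBimod (A : Type) [NonUnitalNormedRing A] [NormedSpace ℂ A] where
  carrier : Type
  [grp : NormedAddCommGroup carrier]
  [mod : NormedSpace ℂ carrier]
  [complete : CompleteSpace carrier]
  lsmul : A → carrier →L[ℂ] carrier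
  rsmul : A → carrier →L[ℂ] carrier
  lsmul_add : ∀ a b, lsmul (a + b) = lsmul a + lsmul b
  rsmul_add : ∀ a b, rsmul (a + b) = rsmul a + rsmul b
  lsmul_smul : ∀ (c : ℂ) (a), lsmul (c • a) = c • lsmul a
  rsmul_smul : ∀ (c : ℂ) (a), rsmul (c • a) = c • rsmul a
  lsmul_mul : ∀ a b, lsmul (a * b) = (lsmul a).comp (lsmul b)
  rsmul_mul : ∀ a b, rsmul (a * b) = (rsmul b).comp (rsmul a)
  lsmul_rsmul : ∀ a b, (lsmul a).comp (rsmul b) = (rsmul b).comp (lsmul a)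
  bound : ∃ C : ℝ, ∀ a, ‖lsmul a‖ ≤ C * ‖a‖ ∧ ‖rsmul a‖ ≤ C * ‖a‖

attribute [instance] BBimod.grp BBimod.mod BBimod.complete

variable {A : Type} [NonUnitalNormedRing A] [NormedSpace ℂ A]

/-- The dual of a Banach bimodule, with the canonical dual actions
`⟨u, Λ·a⟩ = ⟨a·u, Λ⟩` and `⟨u, a·Λ⟩ = ⟨u·a, Λ⟩`. -/
noncomputable def BBimod.dual (M : BBimod A) : BBimod A where
  carrier := M.carrier →L[ℂ] ℂ
  lsmul a := (compL ℂ M.carrier M.carrier ℂ).flip (M.rsmul a)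
  rsmul a := (compL ℂ M.carrier M.carrier ℂ).flip (M.lsmul a)
  lsmul_add a b := by ext Λ x; simp [M.rsmul_add]
  rsmul_add a b := by ext Λ x; simp [M.lsmul_add]
  lsmul_smul c a := by ext Λ x; simp [M.rsmul_smul]
  rsmul_smul c a := by ext Λ x; simp [M.lsmul_smul]
  lsmul_mul a b := by ext Λ x; simp [M.rsmul_mul]
  rsmul_mul a b := by ext Λ x; simp [M.lsmul_mul]
  lsmul_rsmul a b := by
    ext Λ x
    have h : M.lsmul b (M.rsmul a x) = M.rsmul a (M.lsmul b x) := by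
      have := congrArg (fun T : M.carrier →L[ℂ] M.carrier => T x) (M.lsmul_rsmul b a)
      simpa using this
    simp [h]
  bound := by
    obtain ⟨C, hC⟩ := M.bound
    refine ⟨C, fun a => ⟨?_, ?_⟩⟩
    · refine opNorm_le_bound _ ?_ fun Λ => ?_
      · exact le_trans (norm_nonneg _) (hC a).2
      · calc ‖Λ.comp (M.rsmul a)‖ ≤ ‖Λ‖ * ‖M.rsmul a‖ := opNorm_comp_le _ _
          _ ≤ (C * ‖a‖) * ‖Λ‖ := by
              rw [mul_comm]
              exact mul_le_mul_of_nonneg_right (hC a).2 (norm_nonneg _)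
    · refine opNorm_le_bound _ ?_ fun Λ => ?_
      · exact le_trans (norm_nonneg _) (hC a).1
      · calc ‖Λ.comp (M.lsmul a)‖ ≤ ‖Λ‖ * ‖M.lsmul a‖ := opNorm_comp_le _ _
          _ ≤ (C * ‖a‖) * ‖Λ‖ := by
              rw [mul_comm]
              exact mul_le_mul_of_nonneg_right (hC a).1 (norm_nonneg _)

variable (A) [IsScalarTower ℂ A A] [SMulCommClass ℂ A A] [CompleteSpace A]

/-- `A` as a Banach bimodule over itself. -/
noncomputable def BBimod.base : BBimod A where
  carrier := A
  lsmul a := ContinuousLinearMap.mul ℂ A a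
  rsmul a := (ContinuousLinearMap.mul ℂ A).flip a
  lsmul_add a b := by ext x; simp [add_mul]
  rsmul_add a b := by ext x; simp [mul_add]
  lsmul_smul c a := by ext x; simp [smul_mul_assoc]
  rsmul_smul c a := by ext x; simp [mul_smul_comm]
  lsmul_mul a b := by ext x; simp [mul_assoc]
  rsmul_mul a b := by ext x; simp [mul_assoc]
  lsmul_rsmul a b := by ext x; simp [mul_assoc]
  bound := by
    refine ⟨1, fun a => ⟨?_, ?_⟩⟩
    · simpa using ContinuousLinearMap.opNorm_mul_apply_le ℂ A a
    · refine le_trans (opNorm_le_bound _ (norm_nonneg a) fun x => ?_) (by simp)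
      simpa [mul_comm] using norm_mul_le x a


/-- The `n`-th dual `A^(n)` of `A` as a Banach `A`-bimodule. -/
noncomputable def iterDual : ℕ → BBimod A
  | 0 => BBimod.base A
  | n + 1 => (iterDual n).dual

variable {A}

/-- `D` is a derivation from `A` into the Banach bimodule `M`. -/
def IsDerivation (M : BBimod A) (D : A →L[ℂ] M.carrier) : Prop :=
  ∀ a b : A, D (a * b) = M.lsmul a (D b) + M.rsmul b (D a)

/-- `D` is an inner derivation. -/
def IsInner (M : BBimod A) (D : A →L[ℂ] M.carrier) : Prop :=
  ∃ x : M.carrier, ∀ a : A, D a = M.lsmul a x - M.rsmul a x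

/-- `D` is approximately inner: there is a net `(x_i)` in `M` with
`D a = lim_i (a·x_i − x_i·a)` for every `a`. -/
def IsApproxInner (M : BBimod A) (D : A →L[ℂ] M.carrier) : Prop :=
  ∃ (ι : Type) (l : Filter ι) (x : ι → M.carrier), l.NeBot ∧
    ∀ a : A, Tendsto (fun i => M.lsmul a (x i) - M.rsmul a (x i)) l (𝓝 (D a))

variable (A)

/-- `A` is weakly amenable. -/
def WeaklyAmenable : Prop :=
  ∀ D : A →L[ℂ] (iterDual A 1).carrier, IsDerivation (iterDual A 1) D → IsInner (iterDual A 1) D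

/-- `A` is approximately `n`-weakly amenable. -/
def ApproxNWeaklyAmenable (n : ℕ) : Prop :=
  ∀ D : A →L[ℂ] (iterDual A n).carrier,
    IsDerivation (iterDual A n) D → IsApproxInner (iterDual A n) D

/-- `A` is `n`-weakly amenable. -/
def NWeaklyAmenable (n : ℕ) : Prop :=
  ∀ D : A →L[ℂ] (iterDual A n).carrier,
    IsDerivation (iterDual A n) D → IsInner (iterDual A n) D

/-- `A` is approximately weakly amenable. -/
def ApproxWeaklyAmenable : Prop := ApproxNWeaklyAmenable A 1

/-- `A` is approximately amenable: every continuous derivation into the dual of a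
Banach `A`-bimodule is approximately inner. -/
def ApproxAmenable : Prop :=
  ∀ (X : BBimod A) (D : A →L[ℂ] X.dual.carrier), IsDerivation X.dual D → IsApproxInner X.dual D

/-!
When `A` is commutative, the left and right actions of `A` on `A*` coincide, so every
commutator `a·λ - λ·a` vanishes and an approximately inner derivation into `A*` is zero: a
commutative approximately weakly amenable algebra has no nonzero derivations into its dual.
A derivation `D : B → B*` pulls back along `θ` to the derivation `a ↦ D (θ a) ∘ θ` of `A`
into `A*`, which is therefore zero; since `θ` has dense range, `D = 0`, and the zero
derivation is approximately inner.
-/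

section

variable {A : Type} [NonUnitalNormedRing A] [NormedSpace ℂ A]

namespace BBimod

def IsSymmetric (M : BBimod A) : Prop :=
  ∀ a : A, M.lsmul a = M.rsmul a

theorem IsSymmetric.dual {M : BBimod A} (hM : M.IsSymmetric) : M.dual.IsSymmetric := fun a => by
  show (compL ℂ M.carrier M.carrier ℂ).flip (M.rsmul a)
    = (compL ℂ M.carrier M.carrier ℂ).flip (M.lsmul a)
  rw [hM a]

theorem isSymmetric_base [IsScalarTower ℂ A A] [SMulCommClass ℂ A A] [CompleteSpace A]
    (hcomm : ∀ a b : A, a * b = b * a) : (BBimod.base A).IsSymmetric := fun a => by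
  ext x
  exact hcomm a x

end BBimod

theorem IsApproxInner.eq_zero_of_isSymmetric {M : BBimod A} (hM : M.IsSymmetric)
    {D : A →L[ℂ] M.carrier} (hD : IsApproxInner M D) : D = 0 := by
  obtain ⟨ι, l, x, hl, hx⟩ := hD
  ext1 a
  have hcommutator : (fun i => M.lsmul a (x i) - M.rsmul a (x i)) = fun _ => 0 := by
    simp only [hM a, sub_self]
  exact tendsto_nhds_unique (hcommutator ▸ hx a) tendsto_const_nhds

theorem isApproxInner_zero (M : BBimod A) : IsApproxInner M 0 :=
  ⟨Unit, ⊤, fun _ => 0, inferInstance, fun a => by simp⟩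

variable [IsScalarTower ℂ A A] [SMulCommClass ℂ A A] [CompleteSpace A]

theorem ApproxWeaklyAmenable.eq_zero_of_comm (h : ApproxWeaklyAmenable A)
    (hcomm : ∀ a b : A, a * b = b * a) {D : A →L[ℂ] (iterDual A 1).carrier}
    (hD : IsDerivation (iterDual A 1) D) : D = 0 :=
  (h D hD).eq_zero_of_isSymmetric (BBimod.isSymmetric_base hcomm).dual

end

theorem ContinuousLinearMap.flip_compL_injective {𝕜 E F G : Type*} [NontriviallyNormedField 𝕜]
    [NormedAddCommGroup E] [NormedSpace 𝕜 E] [NormedAddCommGroup F] [NormedSpace 𝕜 F]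
    [NormedAddCommGroup G] [NormedSpace 𝕜 G] {θ : E →L[𝕜] F} (hθ : DenseRange θ) :
    Function.Injective ((compL 𝕜 E F G).flip θ) := fun Λ Λ' h =>
  DFunLike.coe_injective <| hθ.equalizer Λ.continuous Λ'.continuous <| congrArg (⇑) h

section

variable {A B : Type} [NonUnitalNormedRing A] [NormedSpace ℂ A]
  [IsScalarTower ℂ A A] [SMulCommClass ℂ A A] [CompleteSpace A]
  [NonUnitalNormedRing B] [NormedSpace ℂ B]
  [IsScalarTower ℂ B B] [SMulCommClass ℂ B B] [CompleteSpace B]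

/-- The transpose `Λ ↦ Λ ∘ θ : B* → A*`. -/
noncomputable def dualTranspose (θ : A →L[ℂ] B) :
    (iterDual B 1).carrier →L[ℂ] (iterDual A 1).carrier :=
  (compL ℂ A B ℂ).flip θ

theorem dualTranspose_injective {θ : A →L[ℂ] B} (hθ : DenseRange θ) :
    Function.Injective (dualTranspose θ) :=
  ContinuousLinearMap.flip_compL_injective hθ

theorem dualTranspose_lsmul {θ : A →L[ℂ] B} (hθ_mul : ∀ a b : A, θ (a * b) = θ a * θ b)
    (a : A) (Λ : (iterDual B 1).carrier) :
    dualTranspose θ ((iterDual B 1).lsmul (θ a) Λ)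
      = (iterDual A 1).lsmul a (dualTranspose θ Λ) := by
  refine ContinuousLinearMap.ext fun (c : A) => ?_
  show (show B →L[ℂ] ℂ from Λ) (θ c * θ a) = (show B →L[ℂ] ℂ from Λ) (θ (c * a))
  rw [hθ_mul]

theorem dualTranspose_rsmul {θ : A →L[ℂ] B} (hθ_mul : ∀ a b : A, θ (a * b) = θ a * θ b)
    (a : A) (Λ : (iterDual B 1).carrier) :
    dualTranspose θ ((iterDual B 1).rsmul (θ a) Λ)
      = (iterDual A 1).rsmul a (dualTranspose θ Λ) := by
  refine ContinuousLinearMap.ext fun (c : A) => ?_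
  show (show B →L[ℂ] ℂ from Λ) (θ a * θ c) = (show B →L[ℂ] ℂ from Λ) (θ (a * c))
  rw [hθ_mul]

noncomputable def dualPullback (θ : A →L[ℂ] B) (D : B →L[ℂ] (iterDual B 1).carrier) :
    A →L[ℂ] (iterDual A 1).carrier :=
  (dualTranspose θ).comp (D.comp θ)

theorem IsDerivation.dualPullback {θ : A →L[ℂ] B}
    (hθ_mul : ∀ a b : A, θ (a * b) = θ a * θ b) {D : B →L[ℂ] (iterDual B 1).carrier}
    (hD : IsDerivation (iterDual B 1) D) :
    IsDerivation (iterDual A 1) (dualPullback θ D) := fun a b => by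
  show dualTranspose θ (D (θ (a * b)))
    = (iterDual A 1).lsmul a (dualTranspose θ (D (θ b)))
      + (iterDual A 1).rsmul b (dualTranspose θ (D (θ a)))
  rw [hθ_mul, hD, map_add, dualTranspose_lsmul hθ_mul, dualTranspose_rsmul hθ_mul]

theorem eq_zero_of_dualPullback_eq_zero {θ : A →L[ℂ] B} (hθ_dense : DenseRange θ)
    {D : B →L[ℂ] (iterDual B 1).carrier} (hD : dualPullback θ D = 0) : D = 0 := by
  have hDθ : ∀ a, D (θ a) = 0 := fun a =>
    dualTranspose_injective hθ_dense <| by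
      rw [map_zero]
      exact DFunLike.congr_fun hD a
  exact DFunLike.coe_injective <|
    hθ_dense.equalizer D.continuous (0 : B →L[ℂ] _).continuous (funext hDθ)

end

variable (A : Type) [NonUnitalNormedRing A] [NormedSpace ℂ A]
  [IsScalarTower ℂ A A] [SMulCommClass ℂ A A] [CompleteSpace A]

theorem approxWeaklyAmenable_of_denseRange_hom
    (hcomm : ∀ a b : A, a * b = b * a) (h : ApproxWeaklyAmenable A)
    {B : Type} [NonUnitalNormedRing B] [NormedSpace ℂ B]
    [IsScalarTower ℂ B B] [SMulCommClass ℂ B B] [CompleteSpace B]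
    (θ : A →L[ℂ] B) (hθ_mul : ∀ a b : A, θ (a * b) = θ a * θ b)
    (hθ_dense : DenseRange θ) :
    ApproxWeaklyAmenable B := by
  intro D hD
  have hD_pullback : dualPullback θ D = 0 := h.eq_zero_of_comm hcomm (hD.dualPullback hθ_mul)
  rw [eq_zero_of_dualPullback_eq_zero hθ_dense hD_pullback]
  exact isApproxInner_zero _
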